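/- arXiv:1810.12372 — 3 statements merged into one kernel-verified Lean document; each statement's English description precedes it below -/
import Mathlib

section
/- Under the assumption |R(κΔT)| + |e^{-κΔT} - R(κΔT)| < 1, the spectral radius of the periodic Parareal error iteration matrix S = L^{-1}B is bounded above by x_l for every l ≥ 1, where x_0 = 1 and x_l = (|R(κΔT)| x_{l-1} + |e^{-κΔT} - R(κΔT)|)^{N/(N+1)}. -/
/-!
If `μ` is an eigenvalue of `L⁻¹ B` with eigenvector `v`, then `B v = μ L v`; its rows read
`v_N = μ v_0` and `μ v_{k+1} = (μ R + e^{-κΔT} - R) v_k`, so `μ ^ (N + 1) = (μ R + e^{-κΔT} - R) ^ N`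
and `m = |μ|` satisfies `m ^ (N + 1) ≤ (|R| m + |e^{-κΔT} - R|) ^ N`. The contraction condition
forces `m ≤ 1 = x_0`; since `y ↦ (|R| y + |e^{-κΔT} - R|) ^ (N / (N + 1))` is monotone and
`m ≤ (|R| m + |e^{-κΔT} - R|) ^ (N / (N + 1))`, induction gives `m ≤ x_l` for all `l`.
-/

open Matrix Real

section Matrices

variable {K : Type*} (N : ℕ)

def periodicPararealL [Ring K] (r : K) : Matrix (Fin (N + 1)) (Fin (N + 1)) K :=
  of fun i j => if i = j then 1 else if (j : ℕ) + 1 = (i : ℕ) then -r else 0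

def periodicPararealB [Ring K] (d : K) : Matrix (Fin (N + 1)) (Fin (N + 1)) K :=
  of fun i j => if i = 0 ∧ j = Fin.last N then 1 else if (j : ℕ) + 1 = (i : ℕ) then d else 0

variable {N}

theorem periodicPararealL_map [Ring K] {K' : Type*} [Ring K'] (f : K →+* K') (r : K) :
    (periodicPararealL N r).map f = periodicPararealL N (f r) := by
  ext i j
  simp only [periodicPararealL, map_apply, of_apply]
  split_ifs <;> simp

theorem periodicPararealB_map [Ring K] {K' : Type*} [Ring K'] (f : K →+* K') (d : K) :
    (periodicPararealB N d).map f = periodicPararealB N (f d) := by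
  ext i j
  simp only [periodicPararealB, map_apply, of_apply]
  split_ifs <;> simp

theorem det_periodicPararealL [CommRing K] (r : K) : (periodicPararealL N r).det = 1 := by
  rw [det_of_isLowerTriangular]
  · exact Finset.prod_eq_one fun i _ => by simp [periodicPararealL]
  · intro i j hij
    have : (i : ℕ) < j := hij
    simp only [periodicPararealL, of_apply]
    rw [if_neg (by omega), if_neg (by omega)]

theorem periodicPararealL_mulVec_zero [Ring K] (r : K) (v : Fin (N + 1) → K) :
    (periodicPararealL N r *ᵥ v) 0 = v 0 := by
  rw [mulVec, dotProduct, Finset.sum_eq_single 0]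
  · simp [periodicPararealL]
  · intro j _ hj
    simp [periodicPararealL, Ne.symm hj]
  · simp

theorem periodicPararealL_mulVec_succ [Ring K] (r : K) (v : Fin (N + 1) → K) (k : Fin N) :
    (periodicPararealL N r *ᵥ v) k.succ = v k.succ - r * v k.castSucc := by
  rw [mulVec, dotProduct, Fintype.sum_eq_add k.succ k.castSucc (by simp [Fin.ext_iff])]
  · simp [periodicPararealL, Fin.ext_iff, sub_eq_add_neg]
  · rintro j ⟨hj₁, hj₂⟩
    simp only [Ne, Fin.ext_iff, Fin.val_succ, Fin.val_castSucc] at hj₁ hj₂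
    simp only [periodicPararealL, of_apply, Fin.ext_iff, Fin.val_succ]
    rw [if_neg (by omega), if_neg (by omega), zero_mul]

theorem periodicPararealB_mulVec_zero [Ring K] (d : K) (v : Fin (N + 1) → K) :
    (periodicPararealB N d *ᵥ v) 0 = v (Fin.last N) := by
  rw [mulVec, dotProduct, Finset.sum_eq_single (Fin.last N)]
  · simp [periodicPararealB]
  · intro j _ hj
    simp [periodicPararealB, hj]
  · simp

theorem periodicPararealB_mulVec_succ [Ring K] (d : K) (v : Fin (N + 1) → K) (k : Fin N) :
    (periodicPararealB N d *ᵥ v) k.succ = d * v k.castSucc := by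
  rw [mulVec, dotProduct, Finset.sum_eq_single k.castSucc]
  · simp [periodicPararealB, Fin.succ_ne_zero]
  · intro j _ hj
    simp only [Ne, Fin.ext_iff, Fin.val_castSucc] at hj
    simp only [periodicPararealB, of_apply, Fin.succ_ne_zero, false_and, if_false, Fin.val_succ]
    rw [if_neg (by omega), zero_mul]
  · simp

end Matrices

section Eigenvalues

variable {K : Type*} {N : ℕ}

theorem exists_mulVec_eq_smul_mulVec_of_mem_spectrum [Field K] {n : Type*} [Fintype n]
    [DecidableEq n] {L B S : Matrix n n K} (hLS : L * S = B) {μ : K} (hμ : μ ∈ spectrum K S) :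
    ∃ v ≠ 0, B *ᵥ v = μ • L *ᵥ v := by
  rw [← spectrum_toLin', ← Module.End.hasEigenvalue_iff_mem_spectrum] at hμ
  obtain ⟨v, hv⟩ := hμ.exists_hasEigenvector
  refine ⟨v, hv.2, ?_⟩
  rw [← hLS, ← mulVec_mulVec, ← mulVec_smul, ← hv.apply_eq_smul, toLin'_apply]

theorem pow_succ_eq_of_mulVec_eq [Field K] {r d μ : K} {v : Fin (N + 1) → K} (hv : v ≠ 0)
    (hμ : μ ≠ 0) (h : periodicPararealB N d *ᵥ v = μ • periodicPararealL N r *ᵥ v) :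
    μ ^ (N + 1) = (μ * r + d) ^ N := by
  set c := μ * r + d
  have hstep (k : Fin N) : μ * v k.succ = c * v k.castSucc := by
    have := congrFun h k.succ
    rw [Pi.smul_apply, periodicPararealB_mulVec_succ, periodicPararealL_mulVec_succ,
      smul_eq_mul] at this
    linear_combination -this
  have hlast : v (Fin.last N) = μ * v 0 := by
    simpa [periodicPararealB_mulVec_zero, periodicPararealL_mulVec_zero] using congrFun h 0
  have hpow : ∀ i : Fin (N + 1), μ ^ (i : ℕ) * v i = c ^ (i : ℕ) * v 0 := by
    refine Fin.induction (by simp) fun k ih => ?_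
    rw [Fin.val_castSucc] at ih
    calc μ ^ (k.succ : ℕ) * v k.succ = μ ^ (k : ℕ) * (μ * v k.succ) := by
          rw [Fin.val_succ]; ring
      _ = c * (μ ^ (k : ℕ) * v k.castSucc) := by rw [hstep]; ring
      _ = c ^ (k.succ : ℕ) * v 0 := by rw [ih, Fin.val_succ]; ring
  have hv0 : v 0 ≠ 0 := by
    intro h0
    refine hv (funext fun i => ?_)
    have := hpow i
    rw [h0, mul_zero] at this
    exact (mul_eq_zero.mp this).resolve_left (pow_ne_zero _ hμ)
  apply mul_right_cancel₀ hv0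
  calc μ ^ (N + 1) * v 0 = μ ^ N * v (Fin.last N) := by rw [hlast]; ring
    _ = c ^ N * v 0 := by simpa using hpow (Fin.last N)

theorem norm_pow_succ_le_of_mulVec_eq [NormedField K] {r d μ : K} {v : Fin (N + 1) → K}
    (hv : v ≠ 0) (h : periodicPararealB N d *ᵥ v = μ • periodicPararealL N r *ᵥ v) :
    ‖μ‖ ^ (N + 1) ≤ (‖r‖ * ‖μ‖ + ‖d‖) ^ N := by
  rcases eq_or_ne μ 0 with rfl | hμ
  · rw [norm_zero, zero_pow N.succ_ne_zero]
    positivity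
  rw [← norm_pow, pow_succ_eq_of_mulVec_eq hv hμ h, norm_pow]
  gcongr
  calc ‖μ * r + d‖ ≤ ‖μ * r‖ + ‖d‖ := norm_add_le _ _
    _ = ‖r‖ * ‖μ‖ + ‖d‖ := by rw [norm_mul, mul_comm]

end Eigenvalues

section RealEstimates

variable {a b m : ℝ} {N : ℕ}

theorem le_one_of_pow_succ_le (ha : 0 ≤ a) (hb : 0 ≤ b) (hab : a + b < 1)
    (h : m ^ (N + 1) ≤ (a * m + b) ^ N) : m ≤ 1 := by
  by_contra! hm
  have h₁ : (a * m + b) ^ N ≤ m ^ N := pow_le_pow_left₀ (by positivity) (by nlinarith) N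
  have h₂ : m ^ N < m ^ (N + 1) := pow_lt_pow_right₀ hm N.lt_succ_self
  linarith

theorem le_rpow_of_pow_succ_le {t : ℝ} (hm : 0 ≤ m) (ht : 0 ≤ t) (h : m ^ (N + 1) ≤ t ^ N) :
    m ≤ t ^ ((N : ℝ) / (N + 1)) := by
  have hpow : (t ^ ((N : ℝ) / (N + 1))) ^ (N + 1) = t ^ N := by
    rw [← rpow_natCast _ (N + 1), ← rpow_mul ht, Nat.cast_succ,
      div_mul_cancel₀ _ (by positivity), rpow_natCast]
  rwa [← pow_le_pow_iff_left₀ hm (by positivity) N.succ_ne_zero, hpow]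

theorem le_iterate_of_pow_succ_le (ha : 0 ≤ a) (hb : 0 ≤ b) (hab : a + b < 1) (hm : 0 ≤ m)
    (h : m ^ (N + 1) ≤ (a * m + b) ^ N) {x : ℕ → ℝ} (hx0 : x 0 = 1)
    (hx : ∀ l, x (l + 1) = (a * x l + b) ^ ((N : ℝ) / (N + 1))) : ∀ l, m ≤ x l
  | 0 => hx0 ▸ le_one_of_pow_succ_le ha hb hab h
  | l + 1 => by
    have ih := le_iterate_of_pow_succ_le ha hb hab hm h hx0 hx l
    rw [hx]
    refine le_rpow_of_pow_succ_le hm (by nlinarith) (h.trans ?_)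
    gcongr

end RealEstimates

theorem stmt_4_general (N : ℕ) (κ ΔT : ℝ) (R : ℝ → ℝ)
    (hcond : |R (κ * ΔT)| + |Real.exp (-(κ * ΔT)) - R (κ * ΔT)| < 1)
    (L B S : Matrix (Fin (N + 1)) (Fin (N + 1)) ℝ)
    (hL : ∀ i j, L i j =
      if i = j then 1 else if (j : ℕ) + 1 = (i : ℕ) then -(R (κ * ΔT)) else 0)
    (hB : ∀ i j, B i j =
      if i = 0 ∧ j = Fin.last N then 1
      else if (j : ℕ) + 1 = (i : ℕ) then Real.exp (-(κ * ΔT)) - R (κ * ΔT) else 0)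
    (hS : S = L⁻¹ * B)
    (x : ℕ → ℝ) (hx0 : x 0 = 1)
    (hx : ∀ l, x (l + 1) =
      (|R (κ * ΔT)| * x l + |Real.exp (-(κ * ΔT)) - R (κ * ΔT)|) ^ ((N : ℝ) / (N + 1))) :
    ∀ l, 1 ≤ l → ∀ μ ∈ spectrum ℂ (S.map (algebraMap ℝ ℂ)), ‖μ‖ ≤ x l := by
  intro l _ μ hμ
  have hL' : L = periodicPararealL N (R (κ * ΔT)) := by ext i j; exact hL i j
  have hB' : B = periodicPararealB N (Real.exp (-(κ * ΔT)) - R (κ * ΔT)) := by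
    ext i j; exact hB i j
  have hLS : L * S = B := by
    rw [hS, ← mul_assoc, mul_nonsing_inv _ (by simp [hL', det_periodicPararealL]), one_mul]
  obtain ⟨v, hv, hBv⟩ :=
    exists_mulVec_eq_smul_mulVec_of_mem_spectrum (by rw [← Matrix.map_mul, hLS]) hμ
  rw [hL', hB', periodicPararealL_map, periodicPararealB_map] at hBv
  have hμ := norm_pow_succ_le_of_mulVec_eq hv hBv
  simp only [Complex.coe_algebraMap, Complex.norm_real, Real.norm_eq_abs] at hμ
  exact le_iterate_of_pow_succ_le (abs_nonneg _) (abs_nonneg _) hcond (norm_nonneg μ) hμ hx0 hx l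

/-- Convergence estimate of the new periodic Parareal algorithm: under the
contraction assumption `|R(κΔT)| + |e^{-κΔT} - R(κΔT)| < 1`, the spectral
radius of the error iteration matrix `S = L⁻¹ B` is bounded above by `x_l`
for every `l ≥ 1`, where `x_0 = 1` and
`x_l = (|R(κΔT)| x_{l-1} + |e^{-κΔT} - R(κΔT)|)^{N/(N+1)}`. -/
theorem stmt_4 (N : ℕ) (hN : 1 ≤ N) (κ T ΔT : ℝ) (hκ : 0 < κ) (hT : 0 < T)
    (hΔT : ΔT = T / N) (R : ℝ → ℝ)
    (hcond : |R (κ * ΔT)| + |Real.exp (-(κ * ΔT)) - R (κ * ΔT)| < 1)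
    (L B S : Matrix (Fin (N + 1)) (Fin (N + 1)) ℝ)
    (hL : ∀ i j, L i j =
      if i = j then 1 else if (j : ℕ) + 1 = (i : ℕ) then -(R (κ * ΔT)) else 0)
    (hB : ∀ i j, B i j =
      if i = 0 ∧ j = Fin.last N then 1
      else if (j : ℕ) + 1 = (i : ℕ) then Real.exp (-(κ * ΔT)) - R (κ * ΔT) else 0)
    (hS : S = L⁻¹ * B)
    (x : ℕ → ℝ) (hx0 : x 0 = 1)
    (hx : ∀ l, x (l + 1) =
      (|R (κ * ΔT)| * x l + |Real.exp (-(κ * ΔT)) - R (κ * ΔT)|) ^ ((N : ℝ) / (N + 1))) :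
    ∀ l, 1 ≤ l → ∀ μ ∈ spectrum ℂ (S.map (algebraMap ℝ ℂ)), ‖μ‖ ≤ x l :=
  stmt_4_general N κ ΔT R hcond L B S hL hB hS x hx0 hx
end

section
/- For the Backward Euler method applied to u' + κu = f with κ > 0 and step size ΔT > 0, the stability function R(z) = 1/(1+z) satisfies the contraction condition |R(κΔT)| + |e^{-κΔT} - R(κΔT)| < 1. -/
/-- The Backward Euler stability function `R(z) = 1/(1+z)` satisfies the
periodic Parareal contraction condition `|R(κΔT)| + |e^{-κΔT} - R(κΔT)| < 1`
for all `κ > 0`, `ΔT > 0`. -/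
theorem stmt_6 (κ ΔT : ℝ) (hκ : 0 < κ) (hΔT : 0 < ΔT) :
    |1 / (1 + κ * ΔT)| + |Real.exp (-(κ * ΔT)) - 1 / (1 + κ * ΔT)| < 1 := by
  set z := κ * ΔT with hz
  have hz0 : 0 < z := mul_pos hκ hΔT
  have h1z : 0 < 1 + z := by linarith
  have hexp : (1 : ℝ) + z < Real.exp z := by
    have := Real.add_one_lt_exp (show z ≠ 0 from ne_of_gt hz0)
    linarith
  have hlt : Real.exp (-z) < 1 / (1 + z) := by
    rw [Real.exp_neg, inv_lt_iff_one_lt_mul₀ (Real.exp_pos z), div_mul_eq_mul_div,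
      lt_div_iff₀ h1z, one_mul, one_mul]
    exact hexp
  have habs1 : |1 / (1 + z)| = 1 / (1 + z) := abs_of_pos (by positivity)
  have habs2 : |Real.exp (-z) - 1 / (1 + z)| = 1 / (1 + z) - Real.exp (-z) := by
    rw [abs_sub_comm]; exact abs_of_pos (by linarith)
  rw [habs1, habs2]
  have hexpneg : 1 - z < Real.exp (-z) := by
    have := Real.add_one_lt_exp (show -z ≠ 0 from by simpa using ne_of_gt hz0)
    linarith
  have key : (1 - z) / (1 + z) < Real.exp (-z) := by
    rcases le_or_gt 1 z with h | h
    · calc (1 - z) / (1 + z) ≤ 0 := div_nonpos_of_nonpos_of_nonneg (by linarith) (le_of_lt h1z)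
      _ < Real.exp (-z) := Real.exp_pos _
    · have h1 : (1 - z) / (1 + z) ≤ 1 - z := by
        rw [div_le_iff₀ h1z]; nlinarith
      linarith
  have heq : 2 / (1 + z) - 1 = (1 - z) / (1 + z) := by field_simp; ring
  have h2 : 2 / (1 + z) = 2 * (1 / (1 + z)) := by ring
  linarith
end

section
/- Consider the scalar recurrence e_n^{k+1} = α e_{n-1}^{k+1} + β e_{n-1}^{k} for n = 1,…,N together with e_0^{k+1} = e_N^{k}. If |α| + |β| < 1, then max_{0≤n≤N} |e_n^{k}| → 0 as k → ∞ for any initial error vector e^{0} ∈ ℝ^{N+1}. -/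
open Filter

/-- If `|α| + |β| < 1`, the errors of the periodic Parareal recurrence
`e_0^{k+1} = e_N^{k}`, `e_n^{k+1} = α e_{n-1}^{k+1} + β e_{n-1}^{k}` satisfy
`max_{0 ≤ n ≤ N} |e_n^{k}| → 0` as `k → ∞`, for any initial error vector. -/
theorem stmt_9 (N : ℕ) (hN : 1 ≤ N) (α β : ℝ) (hαβ : |α| + |β| < 1)
    (e : ℕ → ℕ → ℝ)
    (h0 : ∀ k, e (k + 1) 0 = e k N)
    (hrec : ∀ k n, 1 ≤ n → n ≤ N → e (k + 1) n = α * e (k + 1) (n - 1) + β * e k (n - 1)) :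
    Tendsto (fun k => (Finset.range (N + 1)).sup' (by simp) (fun n => |e k n|))
      atTop (nhds 0) := by
  have hne : (Finset.range (N + 1)).Nonempty := by simp
  set r := |α| + |β| with hr
  have ha : (0:ℝ) ≤ |α| := abs_nonneg _
  have hb : (0:ℝ) ≤ |β| := abs_nonneg _
  have hr0 : 0 ≤ r := by positivity
  set M : ℕ → ℝ := fun k => (Finset.range (N + 1)).sup' hne (fun n => |e k n|) with hM
  have hle : ∀ k n, n ≤ N → |e k n| ≤ M k := by
    intro k n h
    exact Finset.le_sup' (fun n => |e k n|) (Finset.mem_range.2 (Nat.lt_succ_of_le h))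
  have hMnn : ∀ k, 0 ≤ M k := fun k => le_trans (abs_nonneg _) (hle k 0 (by omega))
  have key : ∀ k n, 1 ≤ n → n ≤ N → |e (k+1) n| ≤ r * M k := by
    intro k n h1 h2
    induction n with
    | zero => omega
    | succ m ih =>
      rcases Nat.eq_zero_or_pos m with hm | hm
      · subst hm
        rw [hrec k 1 le_rfl h2]
        simp only [Nat.sub_self]
        calc |α * e (k+1) 0 + β * e k 0| ≤ |α| * |e (k+1) 0| + |β| * |e k 0| :=
              (abs_add_le _ _).trans (by rw [abs_mul, abs_mul])
          _ ≤ |α| * M k + |β| * M k := by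
              have h1' : |e (k+1) 0| ≤ M k := by rw [h0]; exact hle k N le_rfl
              have h2' := hle k 0 (by omega)
              gcongr
          _ = r * M k := by ring
      · have ihm := ih hm (by omega)
        rw [hrec k (m+1) (by omega) h2]
        simp only [Nat.add_sub_cancel]
        calc |α * e (k+1) m + β * e k m| ≤ |α| * |e (k+1) m| + |β| * |e k m| :=
              (abs_add_le _ _).trans (by rw [abs_mul, abs_mul])
          _ ≤ |α| * (r * M k) + |β| * M k := by
              have h2' := hle k m (by omega)
              gcongr
          _ ≤ r * M k := by
              have h3 : r * M k ≤ M k := by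
                nlinarith [mul_nonneg (sub_nonneg.2 hαβ.le) (hMnn k)]
              have h4 := mul_le_mul_of_nonneg_left h3 ha
              have h6 : r * M k = |α| * M k + |β| * M k := by rw [hr]; ring
              linarith
  have hstep1 : ∀ k, M (k+1) ≤ M k := by
    intro k
    apply Finset.sup'_le
    intro n hn
    rcases Nat.eq_zero_or_pos n with h | h
    · subst h; rw [h0]; exact hle k N le_rfl
    · have hn' : n ≤ N := by have := Finset.mem_range.1 hn; omega
      exact (key k n h hn').trans (by nlinarith [hMnn k])
  have hanti : Antitone M := antitone_nat_of_succ_le hstep1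
  have hstep2 : ∀ k, M (k+2) ≤ r * M k := by
    intro k
    apply Finset.sup'_le
    intro n hn
    rcases Nat.eq_zero_or_pos n with h | h
    · subst h
      show |e (k+1+1) 0| ≤ r * M k
      rw [h0]
      exact key k N hN le_rfl
    · have hn' : n ≤ N := by have := Finset.mem_range.1 hn; omega
      have := key (k+1) n h hn'
      have := hstep1 k
      nlinarith
  have hpow : ∀ j, M (2*j) ≤ r^j * M 0 := by
    intro j
    induction j with
    | zero => simp
    | succ j ih =>
      have h1 : M (2*(j+1)) = M (2*j + 2) := by ring_nf
      rw [h1]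
      calc M (2*j + 2) ≤ r * M (2*j) := hstep2 _
        _ ≤ r * (r^j * M 0) := by gcongr
        _ = r^(j+1) * M 0 := by ring
  have hbound : ∀ k, M k ≤ r^(k/2) * M 0 := by
    intro k
    have h1 : 2 * (k/2) ≤ k := Nat.mul_div_le k 2 |>.trans_eq rfl
    exact (hanti h1).trans (hpow _)
  have htend : Tendsto (fun k : ℕ => r^(k/2) * M 0) atTop (nhds 0) := by
    have hdiv : Tendsto (fun k : ℕ => k / 2) atTop atTop := by
      apply tendsto_atTop_atTop.mpr
      intro b
      exact ⟨2*b, fun a ha => Nat.le_div_iff_mul_le (by norm_num) |>.mpr (by omega)⟩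
    have := (tendsto_pow_atTop_nhds_zero_of_lt_one hr0 hαβ).comp hdiv
    simpa using this.mul_const (M 0)
  exact squeeze_zero hMnn hbound htend
end
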